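/- For every ε > 0 and every real x, the three-layer hierarchy Gaussian–Exponential–Gamma marginalizes to the generalized double Pareto density: ∫₀^∞ ∫₀^∞ (2πγ)^(−1/2) · exp(−x²/(2γ)) · (λ²/2) · exp(−λ²γ/2) · (ε^ε/Γ(ε)) · λ^(ε−1) · exp(−ελ) dγ dλ = (1/2) · (1 + |x|/ε)^(−(ε+1)). -/

import Mathlib

open MeasureTheory Real Set

/-!
Substituting `γ = t²` reduces the inner integral to `∫₀^∞ exp (-(c t - d / t)²) dt`, which
equals `√π / (2c)` independently of `d ≥ 0` (Cauchy–Schlömilch): the inversion `t ↦ d / (c t)`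
shows that `c exp (-(c t - d / t)²)` and `(d / t²) exp (-(c t - d / t)²)` have the same
integral, and their sum becomes the Gaussian integral under the bijection `u = c t - d / t` of
`(0, ∞)` onto `ℝ`. Hence the exponential mixture of centred Gaussians is the Laplace density
`(λ / 2) exp (-λ |x|)`, and its Gamma mixture is an Euler integral.
-/

lemma hasDerivAt_mul_sub_div (c d : ℝ) {t : ℝ} (ht : t ≠ 0) :
    HasDerivAt (fun t => c * t - d / t) (c + d / t ^ 2) t := by
  have h : HasDerivAt (fun t => c * t - d * t⁻¹) (c * 1 - d * -(t ^ 2)⁻¹) t :=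
    ((hasDerivAt_id' t).const_mul c).sub ((hasDerivAt_inv ht).const_mul d)
  convert h using 1
  · simp only [div_eq_mul_inv]
  · ring

lemma image_div_Ioi {k : ℝ} (hk : 0 < k) : (fun t => k / t) '' Ioi 0 = Ioi 0 := by
  refine Subset.antisymm (image_subset_iff.2 fun t ht => div_pos hk ht) fun y hy => ?_
  exact ⟨k / y, div_pos hk hy, div_div_cancel₀ hk.ne'⟩

lemma injOn_div_Ioi {k : ℝ} (hk : k ≠ 0) : InjOn (fun t => k / t) (Ioi 0) := by
  intro a _ b _ hab
  simpa only [div_div_cancel₀ hk] using congrArg (k / ·) hab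

section CauchySchlomilch

variable {c d : ℝ}

lemma strictMonoOn_mul_sub_div (hc : 0 < c) (hd : 0 < d) :
    StrictMonoOn (fun t => c * t - d / t) (Ioi 0) := by
  intro a (ha : 0 < a) b _ hab
  have := div_lt_div_of_pos_left hd ha hab
  have := mul_lt_mul_of_pos_left hab hc
  simp only
  linarith

lemma image_mul_sub_div_Ioi (hc : 0 < c) (hd : 0 < d) :
    (fun t => c * t - d / t) '' Ioi 0 = univ := by
  refine eq_univ_of_forall fun u => ?_
  -- the positive root of `c t ^ 2 - u t - d`
  set s := √(u ^ 2 + 4 * c * d)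
  have hs : s ^ 2 = u ^ 2 + 4 * c * d := sq_sqrt (by positivity)
  have hus : 0 < u + s := by
    have : |u| < s := by
      rw [← sqrt_sq_eq_abs]
      exact sqrt_lt_sqrt (sq_nonneg u) (by linarith [mul_pos hc hd])
    linarith [neg_abs_le u]
  refine ⟨(u + s) / (2 * c), div_pos hus (by positivity), ?_⟩
  field_simp
  linear_combination hs

lemma integrableOn_add_div_sq_mul_exp_neg_sq (hc : 0 < c) (hd : 0 < d) :
    IntegrableOn (fun t => (c + d / t ^ 2) * exp (-(c * t - d / t) ^ 2)) (Ioi 0) := by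
  have h := integrableOn_image_iff_integrableOn_abs_deriv_smul measurableSet_Ioi
    (fun t ht => (hasDerivAt_mul_sub_div c d (ne_of_gt ht)).hasDerivWithinAt)
    (strictMonoOn_mul_sub_div hc hd).injOn (fun u => exp (-u ^ 2))
  rw [image_mul_sub_div_Ioi hc hd, integrableOn_univ] at h
  refine (h.1 (by simpa using integrable_exp_neg_mul_sq one_pos)).congr_fun (fun t _ => ?_)
    measurableSet_Ioi
  simp only [abs_of_pos (by positivity : 0 < c + d / t ^ 2), smul_eq_mul]

lemma integral_add_div_sq_mul_exp_neg_sq (hc : 0 < c) (hd : 0 < d) :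
    ∫ t in Ioi 0, (c + d / t ^ 2) * exp (-(c * t - d / t) ^ 2) = √π := by
  have h := integral_image_eq_integral_abs_deriv_smul measurableSet_Ioi
    (fun t ht => (hasDerivAt_mul_sub_div c d (ne_of_gt ht)).hasDerivWithinAt)
    (strictMonoOn_mul_sub_div hc hd).injOn (fun u => exp (-u ^ 2))
  rw [image_mul_sub_div_Ioi hc hd, Measure.restrict_univ] at h
  have hπ : ∫ u, exp (-u ^ 2) = √π := by simpa using integral_gaussian 1
  rw [← hπ, h]
  refine setIntegral_congr_fun measurableSet_Ioi (fun t _ => ?_)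
  simp only [abs_of_pos (by positivity : 0 < c + d / t ^ 2), smul_eq_mul]

lemma integral_div_sq_mul_exp_neg_sq (hc : 0 < c) (hd : 0 < d) :
    ∫ t in Ioi 0, d / t ^ 2 * exp (-(c * t - d / t) ^ 2)
      = c * ∫ t in Ioi 0, exp (-(c * t - d / t) ^ 2) := by
  have hk : 0 < d / c := div_pos hd hc
  have hderiv : ∀ t ∈ Ioi (0 : ℝ), HasDerivWithinAt (fun t => d / c / t) (-(d / c / t ^ 2))
      (Ioi 0) t := fun t ht => by
    simpa [div_eq_mul_inv] using
      ((hasDerivAt_inv (ne_of_gt ht)).const_mul (d / c)).hasDerivWithinAt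
  have h := integral_image_eq_integral_abs_deriv_smul measurableSet_Ioi hderiv
    (injOn_div_Ioi hk.ne') (fun t => exp (-(c * t - d / t) ^ 2))
  rw [image_div_Ioi hk] at h
  rw [h, ← integral_const_mul]
  refine setIntegral_congr_fun measurableSet_Ioi (fun t (ht : 0 < t) => ?_)
  have hinv : c * (d / c / t) - d / (d / c / t) = -(c * t - d / t) := by
    field_simp
    ring
  rw [smul_eq_mul, hinv, neg_sq, abs_neg, abs_of_pos (by positivity)]
  field_simp

lemma integral_exp_neg_sq_mul_sub_div_Ioi (hc : 0 < c) (hd : 0 ≤ d) :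
    ∫ t in Ioi 0, exp (-(c * t - d / t) ^ 2) = √π / (2 * c) := by
  rcases hd.eq_or_lt with rfl | hd
  · simp_rw [zero_div, sub_zero, mul_pow, ← neg_mul, integral_gaussian_Ioi,
      sqrt_div' _ (sq_nonneg c), sqrt_sq hc.le]
    ring
  have hG := integrableOn_add_div_sq_mul_exp_neg_sq hc hd
  have hI : IntegrableOn (fun t => c * exp (-(c * t - d / t) ^ 2)) (Ioi 0) := by
    refine hG.mono' (by fun_prop : Measurable _).aestronglyMeasurable
      ((ae_restrict_mem measurableSet_Ioi).mono fun t _ => ?_)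
    rw [norm_of_nonneg (by positivity)]
    exact mul_le_mul_of_nonneg_right (le_add_of_nonneg_right (by positivity)) (exp_pos _).le
  have hsplit : ∫ t in Ioi 0, d / t ^ 2 * exp (-(c * t - d / t) ^ 2)
      = √π - c * ∫ t in Ioi 0, exp (-(c * t - d / t) ^ 2) := by
    rw [← integral_add_div_sq_mul_exp_neg_sq hc hd, ← integral_const_mul,
      ← integral_sub hG hI]
    congr 1 with t
    ring
  rw [eq_div_iff (by positivity)]
  linarith [integral_div_sq_mul_exp_neg_sq hc hd]

end CauchySchlomilch

lemma integral_rpow_neg_half_mul_exp_neg_div_sub_mul_Ioi {a b : ℝ} (ha : 0 ≤ a) (hb : 0 < b) :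
    ∫ γ in Ioi 0, γ ^ (-(1 / 2) : ℝ) * exp (-a / γ - b * γ)
      = √(π / b) * exp (-2 * √(a * b)) := by
  rw [← integral_comp_rpow_Ioi_of_pos two_pos]
  have hpt : ∀ t ∈ Ioi (0 : ℝ), (2 * t ^ ((2 : ℝ) - 1)) •
        ((t ^ (2 : ℝ)) ^ (-(1 / 2) : ℝ) * exp (-a / t ^ (2 : ℝ) - b * t ^ (2 : ℝ)))
      = 2 * exp (-2 * √(a * b)) * exp (-(√b * t - √a / t) ^ 2) := by
    intro t (ht : 0 < t)
    have hsq : (t ^ (2 : ℝ)) ^ (-(1 / 2) : ℝ) = t⁻¹ := by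
      rw [← rpow_mul ht.le]; norm_num [rpow_neg_one]
    have hexp : -a / t ^ 2 - b * t ^ 2 = -2 * √(a * b) + -(√b * t - √a / t) ^ 2 := by
      rw [sqrt_mul ha]
      field_simp
      linear_combination (t ^ 4) * sq_sqrt hb.le + sq_sqrt ha
    rw [smul_eq_mul, hsq, rpow_two, show (2 : ℝ) - 1 = 1 by norm_num, rpow_one, hexp, exp_add]
    field_simp
  rw [setIntegral_congr_fun measurableSet_Ioi hpt, integral_const_mul,
    integral_exp_neg_sq_mul_sub_div_Ioi (sqrt_pos.2 hb) (sqrt_nonneg a), sqrt_div' _ hb.le]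
  field_simp

lemma integral_gaussian_mul_exponential_Ioi (x : ℝ) {l : ℝ} (hl : 0 < l) :
    ∫ γ in Ioi (0 : ℝ), (2 * π * γ) ^ (-(1/2) : ℝ) * exp (-x ^ 2 / (2 * γ)) *
        (l ^ 2 / 2) * exp (-(l ^ 2) * γ / 2) = l / 2 * exp (-(l * |x|)) := by
  have hpt : ∀ γ ∈ Ioi (0 : ℝ), (2 * π * γ) ^ (-(1/2) : ℝ) * exp (-x ^ 2 / (2 * γ)) *
        (l ^ 2 / 2) * exp (-(l ^ 2) * γ / 2)
      = (2 * π) ^ (-(1/2) : ℝ) * (l ^ 2 / 2) *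
        (γ ^ (-(1 / 2) : ℝ) * exp (-(x ^ 2 / 2) / γ - l ^ 2 / 2 * γ)) := by
    intro γ (hγ : 0 < γ)
    rw [mul_rpow (by positivity) hγ.le, sub_eq_add_neg, exp_add]
    ring_nf
  have h2π : (2 * π) ^ (-(1/2) : ℝ) = (√(2 * π))⁻¹ := by
    rw [rpow_neg (by positivity), ← sqrt_eq_rpow]
  have hπ : √(π / (l ^ 2 / 2)) = √(2 * π) / l := by
    rw [show π / (l ^ 2 / 2) = 2 * π / l ^ 2 by ring, sqrt_div' _ (sq_nonneg l), sqrt_sq hl.le]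
  have hx : √(x ^ 2 / 2 * (l ^ 2 / 2)) = l * |x| / 2 := by
    rw [show x ^ 2 / 2 * (l ^ 2 / 2) = (l * |x| / 2) ^ 2 by rw [div_pow, mul_pow, sq_abs]; ring,
      sqrt_sq (by positivity)]
  rw [setIntegral_congr_fun measurableSet_Ioi hpt, integral_const_mul,
    integral_rpow_neg_half_mul_exp_neg_div_sub_mul_Ioi (by positivity) (by positivity),
    h2π, hπ, hx]
  field_simp

lemma integral_laplace_mul_gamma_Ioi {ε a : ℝ} (hε : 0 < ε) (ha : -ε < a) :
    ∫ l in Ioi (0 : ℝ), l / 2 * exp (-(l * a)) *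
        ((ε ^ ε / Gamma ε) * l ^ (ε - 1) * exp (-ε * l))
      = (1 / 2) * (1 + a / ε) ^ (-(ε + 1)) := by
  have haε : 0 < a + ε := by linarith
  have hpt : ∀ l ∈ Ioi (0 : ℝ), l / 2 * exp (-(l * a)) *
        ((ε ^ ε / Gamma ε) * l ^ (ε - 1) * exp (-ε * l))
      = ε ^ ε / Gamma ε / 2 * (l ^ ((ε + 1) - 1) * exp (-((a + ε) * l))) := by
    intro l (hl : 0 < l)
    rw [add_sub_cancel_right, rpow_sub_one hl.ne',
      show -((a + ε) * l) = -(l * a) + -ε * l by ring, exp_add]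
    field_simp
  rw [setIntegral_congr_fun measurableSet_Ioi hpt, integral_const_mul,
    integral_rpow_mul_exp_neg_mul_Ioi (by positivity) haε, Gamma_add_one hε.ne',
    show 1 + a / ε = (a + ε) / ε by field_simp; ring, rpow_neg (by positivity),
    div_rpow haε.le hε.le, one_div, inv_rpow haε.le, rpow_add_one hε.ne']
  field_simp

/-- The three-layer Gaussian–Exponential–Gamma hierarchy marginalizes to the
generalized double Pareto density GT(1,1,ε). -/
theorem gaussian_exponential_gamma_hierarchy_eq_GDP (ε : ℝ) (hε : 0 < ε) (x : ℝ) :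
    ∫ l in Set.Ioi (0 : ℝ), ∫ γ in Set.Ioi (0 : ℝ),
      (2 * π * γ) ^ (-(1/2) : ℝ) * Real.exp (-x ^ 2 / (2 * γ)) *
        (l ^ 2 / 2) * Real.exp (-(l ^ 2) * γ / 2) *
        ((ε ^ ε / Real.Gamma ε) * l ^ (ε - 1) * Real.exp (-ε * l))
      = (1 / 2) * (1 + |x| / ε) ^ (-(ε + 1)) := by
  have hinner : ∀ l ∈ Ioi (0 : ℝ), ∫ γ in Ioi (0 : ℝ),
      (2 * π * γ) ^ (-(1/2) : ℝ) * exp (-x ^ 2 / (2 * γ)) *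
        (l ^ 2 / 2) * exp (-(l ^ 2) * γ / 2) *
        ((ε ^ ε / Gamma ε) * l ^ (ε - 1) * exp (-ε * l))
      = l / 2 * exp (-(l * |x|)) * ((ε ^ ε / Gamma ε) * l ^ (ε - 1) * exp (-ε * l)) :=
    fun l hl => by rw [integral_mul_const, integral_gaussian_mul_exponential_Ioi x hl]
  rw [setIntegral_congr_fun measurableSet_Ioi hinner,
    integral_laplace_mul_gamma_Ioi hε (by linarith [abs_nonneg x])]
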